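/- arXiv:2406.05509 — 2 statements merged into one kernel-verified Lean document; each statement's English description precedes it below -/
import Mathlib

section
/- Let V and V' be finite types, let F be a nonempty superset-closed family of finsets of V and F' a nonempty superset-closed family of finsets of V', and let φ be a graph isomorphism from the TAR graph of F to the TAR graph of F'. Then every minimal member M' of F' satisfies M' ⊆ φ(Finset.univ), where Finset.univ (the full vertex set of V) is a member of F since F is nonempty and superset-closed. -/
/-!
For a superset-closed family the TAR graph is isometric to its members under the Hamming
distance `#(S ∆ T)`, so the geodesic interval between members `S` and `T` consists of the members
`R` with `S ∩ T ⊆ R ⊆ S ∪ T`; it has the full `2 ^ #(S ∆ T)` elements exactly when `S ∩ T` is a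
member. Between `univ` and any member `M` this is the case. A graph isomorphism `φ` preserves
distances and interval sizes, so for `M' = φ M` the set `φ univ ∩ M'` is a member of `F'`, and
minimality of `M'` forces `φ univ ∩ M' = M'`.
-/

variable {V : Type*} [Fintype V] [DecidableEq V]

/-- A family of finsets is superset-closed if it is closed under taking supersets. -/
def SupersetClosed (F : Finset (Finset V)) : Prop :=
  ∀ ⦃S T : Finset V⦄, S ∈ F → S ⊆ T → T ∈ F

/-- A minimal member of a family: a member no proper subset of which is a member. -/
def IsMinimalMem (F : Finset (Finset V)) (M : Finset V) : Prop :=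
  M ∈ F ∧ ∀ M' : Finset V, M' ⊂ M → M' ∉ F

/-- The TAR graph of a family of finsets: vertices are the members of the family,
two members being adjacent iff their symmetric difference has exactly one element. -/
def TARGraph (F : Finset (Finset V)) : SimpleGraph {S : Finset V // S ∈ F} where
  Adj S T := (symmDiff S.1 T.1).card = 1
  symm := ⟨fun (S T : {S : Finset V // S ∈ F}) (h : (symmDiff S.1 T.1).card = 1) =>
    show (symmDiff T.1 S.1).card = 1 by rwa [symmDiff_comm] at h⟩
  loopless := ⟨fun S h => by simp [symmDiff_self] at h⟩

instance (F : Finset (Finset V)) : DecidableRel (TARGraph F).Adj :=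
  fun S T => inferInstanceAs (Decidable ((symmDiff S.1 T.1).card = 1))

lemma univ_mem {F : Finset (Finset V)} (hne : F.Nonempty) (hsup : SupersetClosed F) :
    (Finset.univ : Finset V) ∈ F :=
  hsup hne.choose_spec (Finset.subset_univ _)

open Finset
open scoped symmDiff

namespace SimpleGraph

variable {α β : Type*} {G : SimpleGraph α} {H : SimpleGraph β}

noncomputable def interval [Fintype α] (G : SimpleGraph α) (u v : α) : Finset α :=
  {w | G.dist u w + G.dist w v = G.dist u v}

lemma Hom.dist_map_le (f : G →g H) {u v : α} (h : G.Reachable u v) :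
    H.dist (f u) (f v) ≤ G.dist u v := by
  obtain ⟨p, hp⟩ := h.exists_walk_length_eq_dist
  simpa [hp] using H.dist_le (p.map f)

lemma Iso.dist_map (φ : G ≃g H) (u v : α) : H.dist (φ u) (φ v) = G.dist u v := by
  by_cases h : G.Reachable u v
  · refine le_antisymm (φ.toHom.dist_map_le h) ?_
    have h' : H.Reachable (φ u) (φ v) := Iso.reachable_iff.mpr h
    simpa using φ.symm.toHom.dist_map_le h'
  · rw [dist_eq_zero_of_not_reachable h,
      dist_eq_zero_of_not_reachable (mt Iso.reachable_iff.mp h)]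

lemma Iso.card_interval [Fintype α] [Fintype β] (φ : G ≃g H) (u v : α) :
    #(H.interval (φ u) (φ v)) = #(G.interval u v) := by
  have : H.interval (φ u) (φ v) = (G.interval u v).map φ.toEquiv.toEmbedding := by
    ext w
    obtain ⟨w, rfl⟩ := φ.surjective w
    rw [show φ w = φ.toEquiv.toEmbedding w from rfl, mem_map']
    simp [interval, Iso.dist_map]
  rw [this, card_map]

end SimpleGraph

section symmDiff

variable {α : Type*} [DecidableEq α]

lemma Finset.card_symmDiff_add_card_symmDiff (A B C : Finset α) :
    #(A ∆ B) + #(B ∆ C) = #(A ∆ C) + 2 * #(A ∆ B ∩ B ∆ C) := by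
  have hunion : A ∆ B ∪ B ∆ C = A ∆ C ∪ (A ∆ B ∩ B ∆ C) := by
    ext x; simp only [mem_union, mem_inter, mem_symmDiff]; tauto
  have hdisj : Disjoint (A ∆ C) (A ∆ B ∩ B ∆ C) := by
    rw [disjoint_left]; intro x; simp only [mem_inter, mem_symmDiff]; tauto
  rw [← card_union_add_card_inter, hunion, card_union_of_disjoint hdisj]
  ring

lemma Finset.card_symmDiff_add_card_symmDiff_eq_iff {A B C : Finset α} :
    #(A ∆ B) + #(B ∆ C) = #(A ∆ C) ↔ B ∈ Icc (A ∩ C) (A ∪ C) := by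
  rw [card_symmDiff_add_card_symmDiff, Nat.add_eq_left, mul_eq_zero, card_eq_zero,
    or_iff_right two_ne_zero, mem_Icc, eq_empty_iff_forall_notMem]
  simp only [subset_iff, mem_inter, mem_union, mem_symmDiff, ← forall_and]
  exact forall_congr' fun x => by tauto

lemma Finset.card_symmDiff_eq_card_union_sub_card_inter (A B : Finset α) :
    #(A ∆ B) = #(A ∪ B) - #(A ∩ B) := by
  rw [symmDiff_eq_sup_sdiff_inf, sup_eq_union, inf_eq_inter,
    card_sdiff_of_subset inter_subset_union]

end symmDiff

namespace TARGraph

variable {F : Finset (Finset V)}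

lemma card_symmDiff_le_length {S T : F} (p : (TARGraph F).Walk S T) :
    #(S.1 ∆ T.1) ≤ p.length := by
  induction p with
  | nil => simp
  | @cons S R T hadj p ih =>
    have hadj : #(S.1 ∆ R.1) = 1 := hadj
    calc #(S.1 ∆ T.1) ≤ #(S.1 ∆ R.1 ∪ R.1 ∆ T.1) := card_le_card (symmDiff_triangle _ _ _)
      _ ≤ #(S.1 ∆ R.1) + #(R.1 ∆ T.1) := card_union_le _ _
      _ ≤ (p.cons _).length := by rw [hadj, SimpleGraph.Walk.length_cons]; omega

lemma exists_adj_card_symmDiff_add_one (hF : SupersetClosed F) {S T : F} (h : S ≠ T) :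
    ∃ R : F, (TARGraph F).Adj S R ∧ #(R.1 ∆ T.1) + 1 = #(S.1 ∆ T.1) := by
  obtain ⟨x, hx, hmem⟩ : ∃ x ∈ S.1 ∆ T.1, S.1 ∆ {x} ∈ F := by
    by_cases hTS : T.1 ⊆ S.1
    · obtain ⟨x, hxS, hxT⟩ :=
        exists_of_ssubset (hTS.ssubset_of_ne (Subtype.coe_ne_coe.mpr h.symm))
      refine ⟨x, mem_symmDiff.mpr (Or.inl ⟨hxS, hxT⟩), hF T.2 fun y hy => ?_⟩
      have : y ≠ x := by rintro rfl; exact hxT hy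
      simp [mem_symmDiff, hTS hy, this]
    · obtain ⟨x, hxT, hxS⟩ := not_subset.mp hTS
      refine ⟨x, mem_symmDiff.mpr (Or.inr ⟨hxT, hxS⟩), hF S.2 fun y hy => ?_⟩
      have : y ≠ x := by rintro rfl; exact hxS hy
      simp [mem_symmDiff, hy, this]
  refine ⟨⟨_, hmem⟩, ?_, ?_⟩
  · show #(S.1 ∆ (S.1 ∆ {x})) = 1
    simp [symmDiff_symmDiff_cancel_left]
  · rw [symmDiff_right_comm, symmDiff_of_ge (singleton_subset_iff.mpr hx),
      sdiff_singleton_eq_erase, card_erase_add_one hx]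

lemma exists_walk_length_eq_card_symmDiff (hF : SupersetClosed F) (S T : F) :
    ∃ p : (TARGraph F).Walk S T, p.length = #(S.1 ∆ T.1) := by
  induction h : #(S.1 ∆ T.1) generalizing S with
  | zero =>
    obtain rfl : S = T := Subtype.ext (by simpa using h)
    exact ⟨.nil, rfl⟩
  | succ n ih =>
    obtain ⟨R, hadj, hR⟩ := exists_adj_card_symmDiff_add_one hF (S := S) (T := T)
      fun hST => by simp [hST] at h
    obtain ⟨p, hp⟩ := ih R (by omega)
    exact ⟨.cons hadj p, by simp [hp]⟩

lemma dist_eq (hF : SupersetClosed F) (S T : F) : (TARGraph F).dist S T = #(S.1 ∆ T.1) := by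
  obtain ⟨p, hp⟩ := exists_walk_length_eq_card_symmDiff hF S T
  obtain ⟨q, hq⟩ := SimpleGraph.Reachable.exists_walk_length_eq_dist ⟨p⟩
  exact le_antisymm (hp ▸ SimpleGraph.dist_le p) (hq ▸ card_symmDiff_le_length q)

lemma map_subtype_interval (hF : SupersetClosed F) (S T : F) :
    ((TARGraph F).interval S T).map (Function.Embedding.subtype _) =
      {R ∈ Icc (S.1 ∩ T.1) (S.1 ∪ T.1) | R ∈ F} := by
  ext R
  simp [SimpleGraph.interval, dist_eq hF, card_symmDiff_add_card_symmDiff_eq_iff]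

lemma card_interval_eq_iff (hF : SupersetClosed F) (S T : F) :
    #((TARGraph F).interval S T) = 2 ^ #(S.1 ∆ T.1) ↔ S.1 ∩ T.1 ∈ F := by
  rw [← card_map, map_subtype_interval hF, card_symmDiff_eq_card_union_sub_card_inter,
    ← card_Icc_finset inter_subset_union, card_filter_eq_iff]
  exact ⟨fun h => h _ (mem_Icc.mpr ⟨subset_rfl, inter_subset_union⟩),
    fun h R hR => hF h (mem_Icc.mp hR).1⟩

end TARGraph

theorem stmt5_general {V' : Type*} [Fintype V'] [DecidableEq V']
    (F : Finset (Finset V)) (hne : F.Nonempty) (hsup : SupersetClosed F)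
    (F' : Finset (Finset V')) (hsup' : SupersetClosed F')
    (φ : TARGraph F ≃g TARGraph F') :
    ∀ M' : Finset V', IsMinimalMem F' M' →
      M' ⊆ (φ ⟨Finset.univ, univ_mem hne hsup⟩).1 := by
  rintro M' ⟨hM', hmin⟩
  set U : F := ⟨univ, univ_mem hne hsup⟩
  obtain ⟨M, hM⟩ := φ.surjective ⟨M', hM'⟩
  have hU : #((TARGraph F).interval U M) = 2 ^ #(U.1 ∆ M.1) :=
    (TARGraph.card_interval_eq_iff hsup U M).mpr (by simp [U])
  have hφU : #((TARGraph F').interval (φ U) (φ M)) = 2 ^ #((φ U).1 ∆ (φ M).1) := by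
    rw [φ.card_interval, ← TARGraph.dist_eq hsup', φ.dist_map, TARGraph.dist_eq hsup, hU]
  have hmem := (TARGraph.card_interval_eq_iff hsup' _ _).mp hφU
  rw [hM] at hmem
  have hinter : (φ U).1 ∩ M' = M' :=
    by_contra fun hne => hmin _ (inter_subset_right.ssubset_of_ne hne) hmem
  exact inter_eq_right.mp hinter

theorem stmt5 {V' : Type*} [Fintype V'] [DecidableEq V']
    (F : Finset (Finset V)) (hne : F.Nonempty) (hsup : SupersetClosed F)
    (F' : Finset (Finset V')) (hne' : F'.Nonempty) (hsup' : SupersetClosed F')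
    (φ : TARGraph F ≃g TARGraph F') :
    ∀ M' : Finset V', IsMinimalMem F' M' →
      M' ⊆ (φ ⟨Finset.univ, univ_mem hne hsup⟩).1 :=
  stmt5_general F hne hsup F' hsup' φ
end

section
/- Let V be a finite type, let F be a nonempty superset-closed family of finsets of V, and let R be a finset of V. Then the following are equivalent: (i) for every S ∈ F the symmetric difference S △ R belongs to F, and the map S ↦ S △ R is a graph automorphism of the TAR graph of F; (ii) R is disjoint from every minimal member of F. -/
/-!
Translation by `R` is an involution of `Finset V` that preserves symmetric differences, hence
adjacency in the TAR graph; so (i) amounts to `F` being closed under `· ∆ R`. If `R` misses every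
minimal member, then `S ∆ R` contains the minimal member below `S`, so lies in `F`. Conversely, if
`x ∈ R ∩ M` for a minimal `M`, then `(M ∪ R) ∆ R = M \ R` is a member properly inside `M`.
-/

variable {V : Type*} [Fintype V] [DecidableEq V]

lemma isMinimalMem_iff_minimal {α : Type*} (F : Finset (Finset α)) (M : Finset α) :
    IsMinimalMem F M ↔ Minimal (· ∈ F) M := by
  refine and_congr_right fun _ => ⟨fun h M' hM' hle => ?_, fun h M' hlt hM' => ?_⟩
  · by_contra hne
    exact h M' (lt_of_le_not_ge hle hne) hM'
  · exact hlt.not_ge (h hM' hlt.le)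

lemma exists_isMinimalMem_subset {α : Type*} (F : Finset (Finset α)) {S : Finset α}
    (hS : S ∈ F) : ∃ M ⊆ S, IsMinimalMem F M := by
  obtain ⟨M, hMS, hM⟩ := exists_minimal_le_of_wellFoundedLT (· ∈ F) S hS
  exact ⟨M, hMS, (isMinimalMem_iff_minimal F M).2 hM⟩

lemma SupersetClosed.symmDiff_mem {α : Type*} [DecidableEq α] {F : Finset (Finset α)}
    (hsup : SupersetClosed F) {R : Finset α} (hR : ∀ M, IsMinimalMem F M → Disjoint R M)
    {S : Finset α} (hS : S ∈ F) : symmDiff S R ∈ F := by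
  obtain ⟨M, hMS, hM⟩ := exists_isMinimalMem_subset F hS
  refine hsup hM.1 fun x hx => Finset.mem_symmDiff.2 (Or.inl ⟨hMS hx, fun hxR => ?_⟩)
  exact Finset.disjoint_left.1 (hR M hM) hxR hx

lemma IsMinimalMem.disjoint_of_forall_symmDiff_mem {α : Type*} [DecidableEq α]
    {F : Finset (Finset α)} (hsup : SupersetClosed F) {M R : Finset α} (hM : IsMinimalMem F M)
    (hR : ∀ S ∈ F, symmDiff S R ∈ F) : Disjoint R M := by
  rw [Finset.disjoint_left]
  intro x hxR hxM
  have hdiff : symmDiff (M ∪ R) R = M \ R := by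
    ext y
    simp only [Finset.mem_symmDiff, Finset.mem_union, Finset.mem_sdiff]
    tauto
  have hmem : M \ R ∈ F := hdiff ▸ hR _ (hsup hM.1 Finset.subset_union_left)
  have hssub : M \ R ⊂ M :=
    (Finset.ssubset_iff_of_subset Finset.sdiff_subset).2
      ⟨x, hxM, fun h => (Finset.mem_sdiff.1 h).2 hxR⟩
  exact hM.2 _ hssub hmem

lemma symmDiff_symmDiff_symmDiff_cancel_right {α : Type*} [GeneralizedBooleanAlgebra α]
    (a b c : α) : symmDiff (symmDiff a c) (symmDiff b c) = symmDiff a b := by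
  rw [symmDiff_symmDiff_symmDiff_comm, symmDiff_self, symmDiff_bot]

def TARGraph.symmDiffIso (F : Finset (Finset V)) (R : Finset V)
    (hR : ∀ S ∈ F, symmDiff S R ∈ F) : TARGraph F ≃g TARGraph F where
  toFun S := ⟨symmDiff S.1 R, hR S.1 S.2⟩
  invFun S := ⟨symmDiff S.1 R, hR S.1 S.2⟩
  left_inv S := Subtype.ext (symmDiff_symmDiff_cancel_right R S.1)
  right_inv S := Subtype.ext (symmDiff_symmDiff_cancel_right R S.1)
  map_rel_iff' {S T} := by
    change (symmDiff (symmDiff S.1 R) (symmDiff T.1 R)).card = 1 ↔ _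
    rw [symmDiff_symmDiff_symmDiff_cancel_right]
    rfl

theorem stmt6_general (F : Finset (Finset V)) (hsup : SupersetClosed F)
    (R : Finset V) :
    ((∀ S ∈ F, symmDiff S R ∈ F) ∧
      ∃ φ : TARGraph F ≃g TARGraph F,
        ∀ S : {S : Finset V // S ∈ F}, (φ S).1 = symmDiff S.1 R) ↔
    (∀ M : Finset V, IsMinimalMem F M → Disjoint R M) := by
  constructor
  · rintro ⟨hR, -⟩ M hM
    exact hM.disjoint_of_forall_symmDiff_mem hsup hR
  · intro hR
    have hclosed : ∀ S ∈ F, symmDiff S R ∈ F := fun S hS => hsup.symmDiff_mem hR hS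
    exact ⟨hclosed, TARGraph.symmDiffIso F R hclosed, fun _ => rfl⟩

theorem stmt6 (F : Finset (Finset V)) (hne : F.Nonempty) (hsup : SupersetClosed F)
    (R : Finset V) :
    ((∀ S ∈ F, symmDiff S R ∈ F) ∧
      ∃ φ : TARGraph F ≃g TARGraph F,
        ∀ S : {S : Finset V // S ∈ F}, (φ S).1 = symmDiff S.1 R) ↔
    (∀ M : Finset V, IsMinimalMem F M → Disjoint R M) :=
  stmt6_general F hsup R
end
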